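/- arXiv:1707.02428 — 13 statements merged into one kernel-verified Lean document; each statement's English description precedes it below -/
import Mathlib

section
/- Let m, n be positive integers, F1 a family of subsets of [m] = {1,...,m}, F2 a family of subsets of [n], and Q = (q_{ij}) an m×n real matrix. If Q can be written as Q = E + F where E has the constant objective property with respect to F1 and F has the constant objective property with respect to F2 (i.e., Q ∈ CVP1(F1) + CVP2(F2)), then Q is linearizable with respect to (F1, F2). -/
/-- Sufficient condition for linearizability of COPIC: if the interaction cost
matrix `Q` decomposes as `E + F` where `E` has the constant objective property
with respect to `F1` and `F` has the constant objective property with respect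
to `F2`, then `Q` is linearizable with respect to `(F1, F2)`. -/
theorem copic_sufficient_linearizable
    (m n : ℕ) (hm : 0 < m) (hn : 0 < n)
    (F1 : Set (Finset (Fin m))) (F2 : Set (Finset (Fin n)))
    (Q E F : Fin m → Fin n → ℝ)
    (hQ : ∀ i j, Q i j = E i j + F i j)
    (hE : ∀ j : Fin n, ∃ K : ℝ, ∀ S1 ∈ F1, ∑ i ∈ S1, E i j = K)
    (hF : ∀ i : Fin m, ∃ K : ℝ, ∀ S2 ∈ F2, ∑ j ∈ S2, F i j = K) :
    ∃ (a : Fin m → ℝ) (b : Fin n → ℝ),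
      ∀ S1 ∈ F1, ∀ S2 ∈ F2,
        ∑ i ∈ S1, ∑ j ∈ S2, Q i j = ∑ i ∈ S1, a i + ∑ j ∈ S2, b j := by
  choose b hb using hE
  choose a ha using hF
  refine ⟨a, b, fun S1 hS1 S2 hS2 => ?_⟩
  have : ∑ i ∈ S1, ∑ j ∈ S2, Q i j
      = ∑ i ∈ S1, ∑ j ∈ S2, F i j + ∑ j ∈ S2, ∑ i ∈ S1, E i j := by
    simp only [hQ, Finset.sum_add_distrib]
    rw [Finset.sum_comm]
    ring
  rw [this]
  congr 1
  · exact Finset.sum_congr rfl fun i _ => ha i S2 hS2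
  · exact Finset.sum_congr rfl fun j _ => hb j S1 hS1
end

section
/- Let F1 be a family of subsets of [m] and F2 a family of subsets of [n] satisfying: (i) there exist vectors a ∈ ℝ^m, b ∈ ℝ^n and nonzero constants K_a, K_b such that Σ_{i∈S1} a_i = K_a for all S1 ∈ F1 and Σ_{j∈S2} b_j = K_b for all S2 ∈ F2; and (ii) every m×n real matrix Q̄ = (q̄_{ij}) with Σ_{i∈S1} Σ_{j∈S2} q̄_{ij} = 0 for all S1 ∈ F1 and S2 ∈ F2 belongs to CVP1(F1)+CVP2(F2). Then every m×n real matrix Q that is linearizable with respect to (F1, F2) belongs to CVP1(F1)+CVP2(F2). -/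
/-- Necessary condition for linearizability of COPIC: under conditions (i) and (ii),
every linearizable interaction cost matrix `Q` lies in `CVP1(F1) + CVP2(F2)`. -/
theorem copic_necessary_linearizable
    (m n : ℕ) (hm : 0 < m) (hn : 0 < n)
    (F1 : Set (Finset (Fin m))) (F2 : Set (Finset (Fin n)))
    -- condition (i)
    (hi : ∃ (a : Fin m → ℝ) (b : Fin n → ℝ) (Ka Kb : ℝ), Ka ≠ 0 ∧ Kb ≠ 0 ∧
      (∀ S1 ∈ F1, ∑ i ∈ S1, a i = Ka) ∧ (∀ S2 ∈ F2, ∑ j ∈ S2, b j = Kb))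
    -- condition (ii)
    (hii : ∀ Qbar : Fin m → Fin n → ℝ,
      (∀ S1 ∈ F1, ∀ S2 ∈ F2, ∑ i ∈ S1, ∑ j ∈ S2, Qbar i j = 0) →
      ∃ E F : Fin m → Fin n → ℝ,
        (∀ i j, Qbar i j = E i j + F i j) ∧
        (∀ j : Fin n, ∃ K : ℝ, ∀ S1 ∈ F1, ∑ i ∈ S1, E i j = K) ∧
        (∀ i : Fin m, ∃ K : ℝ, ∀ S2 ∈ F2, ∑ j ∈ S2, F i j = K))
    (Q : Fin m → Fin n → ℝ)
    -- Q is linearizable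
    (hlin : ∃ (a : Fin m → ℝ) (b : Fin n → ℝ),
      ∀ S1 ∈ F1, ∀ S2 ∈ F2,
        ∑ i ∈ S1, ∑ j ∈ S2, Q i j = ∑ i ∈ S1, a i + ∑ j ∈ S2, b j) :
    ∃ E F : Fin m → Fin n → ℝ,
      (∀ i j, Q i j = E i j + F i j) ∧
      (∀ j : Fin n, ∃ K : ℝ, ∀ S1 ∈ F1, ∑ i ∈ S1, E i j = K) ∧
      (∀ i : Fin m, ∃ K : ℝ, ∀ S2 ∈ F2, ∑ j ∈ S2, F i j = K) := by

  obtain ⟨a, b, Ka, Kb, hKa, hKb, ha, hb⟩ := hi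
  obtain ⟨a', b', hQ⟩ := hlin
  set Qbar : Fin m → Fin n → ℝ :=
    fun i j => Q i j - a' i * b j / Kb - a i * b' j / Ka with hQbar
  have hzero : ∀ S1 ∈ F1, ∀ S2 ∈ F2, ∑ i ∈ S1, ∑ j ∈ S2, Qbar i j = 0 := by
    intro S1 h1 S2 h2
    have h1' := ha S1 h1
    have h2' := hb S2 h2
    have hq := hQ S1 h1 S2 h2
    simp only [hQbar, Finset.sum_sub_distrib]
    have e1 : ∑ i ∈ S1, ∑ j ∈ S2, a' i * b j / Kb = ∑ i ∈ S1, a' i := by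
      refine Finset.sum_congr rfl fun i _ => ?_
      rw [← Finset.sum_div, ← Finset.mul_sum, h2', mul_div_assoc, div_self hKb, mul_one]
    have e2 : ∑ i ∈ S1, ∑ j ∈ S2, a i * b' j / Ka = ∑ j ∈ S2, b' j := by
      rw [Finset.sum_comm]
      refine Finset.sum_congr rfl fun j _ => ?_
      have : ∑ i ∈ S1, a i * b' j / Ka = (∑ i ∈ S1, a i) * b' j / Ka := by
        simp [Finset.sum_div, Finset.sum_mul]
      rw [this, h1', mul_comm, mul_div_assoc, div_self hKa, mul_one]
    rw [e1, e2, hq]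
    ring
  obtain ⟨E, F, hEF, hE, hF⟩ := hii Qbar hzero
  refine ⟨fun i j => E i j + a i * b' j / Ka, fun i j => F i j + a' i * b j / Kb,
    ?_, ?_, ?_⟩
  · intro i j
    have := hEF i j
    simp only [hQbar] at this
    linarith
  · intro j
    obtain ⟨K, hK⟩ := hE j
    refine ⟨K + b' j, fun S1 h1 => ?_⟩
    rw [Finset.sum_add_distrib, hK S1 h1]
    have : ∑ i ∈ S1, a i * b' j / Ka = (∑ i ∈ S1, a i) * b' j / Ka := by
      simp [Finset.sum_div, Finset.sum_mul]
    rw [this, ha S1 h1, mul_comm, mul_div_assoc, div_self hKa, mul_one]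
  · intro i
    obtain ⟨K, hK⟩ := hF i
    refine ⟨K + a' i, fun S2 h2 => ?_⟩
    rw [Finset.sum_add_distrib, hK S2 h2]
    rw [← Finset.sum_div, ← Finset.mul_sum, hb S2 h2, mul_div_assoc, div_self hKb, mul_one]
end

section
/- Let F2 be a family of subsets of [n] and Q = (q_{ij}) an m×n real matrix. Then Q is linearizable with respect to (2^{[m]}, F2), where 2^{[m]} is the family of all subsets of [m], if and only if Q has the constant objective property with respect to F2, i.e., for every i ∈ [m] there is a constant K_i with Σ_{j∈S2} q_{ij} = K_i for all S2 ∈ F2. -/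
/-- `COPIC(2^[m], F2, Q, c, d)` is linearizable if and only if `Q` has the
constant objective property with respect to `F2`. -/
theorem copic_unconstrained_linearizable_iff
    (m n : ℕ) (hm : 0 < m) (hn : 0 < n)
    (F2 : Set (Finset (Fin n))) (Q : Fin m → Fin n → ℝ) :
    (∃ (a : Fin m → ℝ) (b : Fin n → ℝ),
      ∀ S1 : Finset (Fin m), ∀ S2 ∈ F2,
        ∑ i ∈ S1, ∑ j ∈ S2, Q i j = ∑ i ∈ S1, a i + ∑ j ∈ S2, b j) ↔
    (∀ i : Fin m, ∃ K : ℝ, ∀ S2 ∈ F2, ∑ j ∈ S2, Q i j = K) := by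
  constructor
  · rintro ⟨a, b, h⟩ i
    refine ⟨a i, fun S2 hS2 => ?_⟩
    have h0 := h ∅ S2 hS2
    simp at h0
    have h1 := h {i} S2 hS2
    simp only [Finset.sum_singleton] at h1
    rw [← h0, add_zero] at h1
    exact h1
  · intro h
    choose K hK using h
    refine ⟨K, 0, fun S1 S2 hS2 => ?_⟩
    simp only [Pi.zero_apply, Finset.sum_const_zero, add_zero]
    exact Finset.sum_congr rfl fun i _ => hK i S2 hS2
end

section
/- Let m, n, k1, k2 be integers with 1 ≤ k1 < m and 1 ≤ k2 < n, and let Q = (q_{ij}) be an m×n real matrix. Then there exist vectors α ∈ ℝ^m and β ∈ ℝ^n such that Σ_{i∈S1} Σ_{j∈S2} q_{ij} = Σ_{i∈S1} α_i + Σ_{j∈S2} β_j for every k1-element subset S1 of [m] and every k2-element subset S2 of [n], if and only if there exist vectors a ∈ ℝ^m and b ∈ ℝ^n with q_{ij} = a_i + b_j for all i ∈ [m], j ∈ [n]. -/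
/-- Linearizability characterization for `COPIC(B(U_{m,k1}), B(U_{n,k2}), Q, c, d)`:
`Q` is linearizable with respect to bases of uniform matroids if and only if
`q_{ij} = a_i + b_j`. -/
theorem copic_uniform_matroids_linearizable_iff
    (m n k1 k2 : ℕ) (hk1 : 1 ≤ k1) (hk1m : k1 < m) (hk2 : 1 ≤ k2) (hk2n : k2 < n)
    (Q : Fin m → Fin n → ℝ) :
    (∃ (α : Fin m → ℝ) (β : Fin n → ℝ),
      ∀ S1 : Finset (Fin m), S1.card = k1 →
      ∀ S2 : Finset (Fin n), S2.card = k2 →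
        ∑ i ∈ S1, ∑ j ∈ S2, Q i j = ∑ i ∈ S1, α i + ∑ j ∈ S2, β j) ↔
    (∃ (a : Fin m → ℝ) (b : Fin n → ℝ), ∀ i j, Q i j = a i + b j) := by
  constructor
  · rintro ⟨α, β, h⟩
    have key : ∀ i i' : Fin m, ∀ j j' : Fin n, Q i j + Q i' j' = Q i j' + Q i' j := by
      intro i i' j j'
      rcases eq_or_ne i i' with rfl | hii
      · ring
      rcases eq_or_ne j j' with rfl | hjj
      · ring
      -- build a (k1-1)-set avoiding i, i'
      have hcard1 : k1 - 1 ≤ ((Finset.univ.erase i).erase i').card := by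
        rw [Finset.card_erase_of_mem (Finset.mem_erase.2 ⟨Ne.symm hii, Finset.mem_univ _⟩),
          Finset.card_erase_of_mem (Finset.mem_univ _), Finset.card_univ, Fintype.card_fin]
        omega
      obtain ⟨S1, hS1sub, hS1card⟩ := Finset.exists_subset_card_eq hcard1
      have hiS1 : i ∉ S1 := fun hx =>
        (Finset.mem_erase.1 (Finset.mem_of_mem_erase (hS1sub hx))).1 rfl
      have hi'S1 : i' ∉ S1 := fun hx => (Finset.mem_erase.1 (hS1sub hx)).1 rfl
      -- build a (k2-1)-set avoiding j, j'
      have hcard2 : k2 - 1 ≤ ((Finset.univ.erase j).erase j').card := by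
        rw [Finset.card_erase_of_mem (Finset.mem_erase.2 ⟨Ne.symm hjj, Finset.mem_univ _⟩),
          Finset.card_erase_of_mem (Finset.mem_univ _), Finset.card_univ, Fintype.card_fin]
        omega
      obtain ⟨S0, hS0sub, hS0card⟩ := Finset.exists_subset_card_eq hcard2
      have hjS0 : j ∉ S0 := fun hx =>
        (Finset.mem_erase.1 (Finset.mem_of_mem_erase (hS0sub hx))).1 rfl
      have hj'S0 : j' ∉ S0 := fun hx => (Finset.mem_erase.1 (hS0sub hx)).1 rfl
      have hT : (insert i S1).card = k1 := by
        rw [Finset.card_insert_of_notMem hiS1, hS1card]; omega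
      have hT' : (insert i' S1).card = k1 := by
        rw [Finset.card_insert_of_notMem hi'S1, hS1card]; omega
      have hU : (insert j S0).card = k2 := by
        rw [Finset.card_insert_of_notMem hjS0, hS0card]; omega
      have hU' : (insert j' S0).card = k2 := by
        rw [Finset.card_insert_of_notMem hj'S0, hS0card]; omega
      have h1 := h _ hT _ hU
      have h2 := h _ hT _ hU'
      have h3 := h _ hT' _ hU
      have h4 := h _ hT' _ hU'
      simp only [Finset.sum_insert hiS1, Finset.sum_insert hi'S1, Finset.sum_insert hjS0,
        Finset.sum_insert hj'S0] at h1 h2 h3 h4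
      linarith
    have hm0 : 0 < m := by omega
    have hn0 : 0 < n := by omega
    refine ⟨fun i => Q i ⟨0, hn0⟩ - Q ⟨0, hm0⟩ ⟨0, hn0⟩, fun j => Q ⟨0, hm0⟩ j, ?_⟩
    intro i j
    have := key i ⟨0, hm0⟩ j ⟨0, hn0⟩
    simp only []
    linarith
  · rintro ⟨a, b, hab⟩
    refine ⟨fun i => (k2 : ℝ) * a i, fun j => (k1 : ℝ) * b j, ?_⟩
    intro S1 h1 S2 h2
    have : ∀ i : Fin m, ∑ j ∈ S2, Q i j = (k2 : ℝ) * a i + ∑ j ∈ S2, b j := by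
      intro i
      simp only [hab, Finset.sum_add_distrib, Finset.sum_const, nsmul_eq_mul, h2]
    rw [Finset.sum_congr rfl fun i _ => this i, Finset.sum_add_distrib,
      Finset.sum_const, h1, nsmul_eq_mul, Finset.mul_sum]
end

section
/- Let m, n ≥ 2 and let Q = (q_{ijkℓ}) be a real array indexed by (i,j) ∈ [m]×[m] and (k,ℓ) ∈ [n]×[n]. Then there exist arrays C = (c_{ij}) ∈ ℝ^{m×m} and D = (d_{kℓ}) ∈ ℝ^{n×n} such that Σ_{i=1}^{m} Σ_{k=1}^{n} q_{i,σ(i),k,τ(k)} = Σ_{i=1}^{m} c_{i,σ(i)} + Σ_{k=1}^{n} d_{k,τ(k)} for every permutation σ of [m] and every permutation τ of [n], if and only if there exist real arrays A = (a_{ijk}), B = (b_{ijℓ}), C' = (c'_{ikℓ}), D' = (d'_{jkℓ}) such that q_{ijkℓ} = a_{ijk} + b_{ijℓ} + c'_{ikℓ} + d'_{jkℓ} for all i,j ∈ [m] and k,ℓ ∈ [n]. -/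
open Finset

/-- Key swap identity: the mixed fourth difference of `Q` vanishes. -/
lemma copic_swap_identity {m n : ℕ} [NeZero m] [NeZero n]
    (Q : Fin m → Fin m → Fin n → Fin n → ℝ)
    (C : Fin m → Fin m → ℝ) (D : Fin n → Fin n → ℝ)
    (H : ∀ (σ : Equiv.Perm (Fin m)) (τ : Equiv.Perm (Fin n)),
      ∑ i : Fin m, ∑ k : Fin n, Q i (σ i) k (τ k)
        = ∑ i : Fin m, C i (σ i) + ∑ k : Fin n, D k (τ k))
    (i j : Fin m) (k l : Fin n) (hi : i ≠ 0) (hj : j ≠ 0) (hk : k ≠ 0) (hl : l ≠ 0) :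
    Q i j k l - Q i j k 0 - Q i j 0 l + Q i j 0 0
      - Q i 0 k l + Q i 0 k 0 + Q i 0 0 l - Q i 0 0 0
      - Q 0 j k l + Q 0 j k 0 + Q 0 j 0 l - Q 0 j 0 0
      + Q 0 0 k l - Q 0 0 k 0 - Q 0 0 0 l + Q 0 0 0 0 = 0 := by
  set σ : Equiv.Perm (Fin m) := Equiv.swap i j with hσ
  set σ' : Equiv.Perm (Fin m) := σ * Equiv.swap i 0 with hσ'
  set τ : Equiv.Perm (Fin n) := Equiv.swap k l with hτ
  set τ' : Equiv.Perm (Fin n) := τ * Equiv.swap k 0 with hτ'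
  -- values of the permutations at the relevant points
  have hσi : σ i = j := Equiv.swap_apply_left i j
  have hσ0 : σ 0 = 0 := Equiv.swap_apply_of_ne_of_ne (Ne.symm hi) (Ne.symm hj)
  have hσ'i : σ' i = 0 := by
    simp only [hσ', Equiv.Perm.mul_apply, Equiv.swap_apply_left, hσ0]
  have hσ'0 : σ' 0 = j := by
    simp only [hσ', Equiv.Perm.mul_apply, Equiv.swap_apply_right, hσi]
  have hσ'eq : ∀ a : Fin m, a ≠ i → a ≠ 0 → σ' a = σ a := by
    intro a ha ha0
    simp only [hσ', Equiv.Perm.mul_apply, Equiv.swap_apply_of_ne_of_ne ha ha0]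
  have hτk : τ k = l := Equiv.swap_apply_left k l
  have hτ0 : τ 0 = 0 := Equiv.swap_apply_of_ne_of_ne (Ne.symm hk) (Ne.symm hl)
  have hτ'k : τ' k = 0 := by
    simp only [hτ', Equiv.Perm.mul_apply, Equiv.swap_apply_left, hτ0]
  have hτ'0 : τ' 0 = l := by
    simp only [hτ', Equiv.Perm.mul_apply, Equiv.swap_apply_right, hτk]
  have hτ'eq : ∀ b : Fin n, b ≠ k → b ≠ 0 → τ' b = τ b := by
    intro b hb hb0
    simp only [hτ', Equiv.Perm.mul_apply, Equiv.swap_apply_of_ne_of_ne hb hb0]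
  -- the combined sum vanishes
  have hsum : ∑ a : Fin m, ∑ b : Fin n,
      (Q a (σ a) b (τ b) + Q a (σ' a) b (τ' b)
        - Q a (σ a) b (τ' b) - Q a (σ' a) b (τ b)) = 0 := by
    have e1 := H σ τ
    have e2 := H σ' τ'
    have e3 := H σ τ'
    have e4 := H σ' τ
    simp only [Finset.sum_add_distrib, Finset.sum_sub_distrib]
    linarith
  -- reduce the double sum to four terms
  have inner_eval : ∀ a : Fin m, ∑ b : Fin n,
      (Q a (σ a) b (τ b) + Q a (σ' a) b (τ' b)
        - Q a (σ a) b (τ' b) - Q a (σ' a) b (τ b))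
      = (Q a (σ a) k (τ k) + Q a (σ' a) k (τ' k)
          - Q a (σ a) k (τ' k) - Q a (σ' a) k (τ k))
        + (Q a (σ a) 0 (τ 0) + Q a (σ' a) 0 (τ' 0)
          - Q a (σ a) 0 (τ' 0) - Q a (σ' a) 0 (τ 0)) := by
    intro a
    refine Finset.sum_eq_add_of_mem k 0 (Finset.mem_univ _) (Finset.mem_univ _) hk ?_
    intro b _ ⟨hb, hb0⟩
    rw [hτ'eq b hb hb0]
    ring
  have outer : ∑ a : Fin m, ∑ b : Fin n,
      (Q a (σ a) b (τ b) + Q a (σ' a) b (τ' b)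
        - Q a (σ a) b (τ' b) - Q a (σ' a) b (τ b))
      = (∑ b : Fin n, (Q i (σ i) b (τ b) + Q i (σ' i) b (τ' b)
          - Q i (σ i) b (τ' b) - Q i (σ' i) b (τ b)))
        + (∑ b : Fin n, (Q 0 (σ 0) b (τ b) + Q 0 (σ' 0) b (τ' b)
          - Q 0 (σ 0) b (τ' b) - Q 0 (σ' 0) b (τ b))) := by
    refine Finset.sum_eq_add_of_mem i 0 (Finset.mem_univ _) (Finset.mem_univ _) hi ?_
    intro a _ ⟨ha, ha0⟩
    rw [hσ'eq a ha ha0]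
    exact Finset.sum_eq_zero fun b _ => by ring
  rw [outer, inner_eval i, inner_eval 0, hσi, hσ0, hσ'i, hσ'0, hτk, hτ0, hτ'k, hτ'0] at hsum
  linarith

/-- Linearizability characterization for `COPIC(PM(K_{m,m}), PM(K_{n,n}), Q, c, d)`:
the interaction cost array `Q` is linearizable with respect to pairs of perfect
matchings (identified with permutations) if and only if
`q_{ijkl} = a_{ijk} + b_{ijl} + c'_{ikl} + d'_{jkl}`. -/
theorem copic_matchings_matchings_linearizable_iff
    (m n : ℕ) (hm : 2 ≤ m) (hn : 2 ≤ n)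
    (Q : Fin m → Fin m → Fin n → Fin n → ℝ) :
    (∃ (C : Fin m → Fin m → ℝ) (D : Fin n → Fin n → ℝ),
      ∀ (σ : Equiv.Perm (Fin m)) (τ : Equiv.Perm (Fin n)),
        ∑ i : Fin m, ∑ k : Fin n, Q i (σ i) k (τ k)
          = ∑ i : Fin m, C i (σ i) + ∑ k : Fin n, D k (τ k)) ↔
    (∃ (A : Fin m → Fin m → Fin n → ℝ) (B : Fin m → Fin m → Fin n → ℝ)
       (C' : Fin m → Fin n → Fin n → ℝ) (D' : Fin m → Fin n → Fin n → ℝ),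
      ∀ (i j : Fin m) (k l : Fin n),
        Q i j k l = A i j k + B i j l + C' i k l + D' j k l) := by
  haveI : NeZero m := ⟨by omega⟩
  haveI : NeZero n := ⟨by omega⟩
  constructor
  · rintro ⟨C, D, H⟩
    refine ⟨fun i j k => Q i j k 0,
      fun i j l => Q i j 0 l - Q i j 0 0,
      fun i k l => Q i 0 k l - Q i 0 k 0 - Q i 0 0 l + Q i 0 0 0,
      fun j k l => Q 0 j k l - Q 0 j k 0 - Q 0 j 0 l + Q 0 j 0 0
        - Q 0 0 k l + Q 0 0 k 0 + Q 0 0 0 l - Q 0 0 0 0, ?_⟩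
    intro i j k l
    rcases eq_or_ne i 0 with rfl | hi
    · ring
    rcases eq_or_ne j 0 with rfl | hj
    · ring
    rcases eq_or_ne k 0 with rfl | hk
    · ring
    rcases eq_or_ne l 0 with rfl | hl
    · ring
    have key := copic_swap_identity Q C D H i j k l hi hj hk hl
    dsimp only
    linarith
  · rintro ⟨A, B, C', D', hq⟩
    refine ⟨fun i j => (∑ k : Fin n, A i j k) + (∑ l : Fin n, B i j l),
      fun k l => (∑ i : Fin m, C' i k l) + (∑ j : Fin m, D' j k l), ?_⟩
    intro σ τ
    simp only [hq]
    have h1 : ∀ i : Fin m, ∑ k : Fin n, B i (σ i) (τ k) = ∑ l : Fin n, B i (σ i) l :=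
      fun i => Equiv.sum_comp τ (fun l => B i (σ i) l)
    have h2 : ∀ k : Fin n, ∑ i : Fin m, D' (σ i) k (τ k) = ∑ j : Fin m, D' j k (τ k) :=
      fun k => Equiv.sum_comp σ (fun j => D' j k (τ k))
    simp only [Finset.sum_add_distrib]
    rw [Finset.sum_congr rfl (fun i _ => h1 i)]
    rw [Finset.sum_comm (f := fun i k => C' i k (τ k)),
        Finset.sum_comm (f := fun i k => D' (σ i) k (τ k))]
    rw [Finset.sum_congr rfl (fun k _ => h2 k)]
    ring
end

section
/- Let m, n ≥ 3, let E_m and E_n denote the edge sets of the complete graphs K_m and K_n, and let Q = (q_{ef}) be a real matrix indexed by E_m × E_n. Then there exist vectors α : E_m → ℝ and β : E_n → ℝ such that Σ_{e∈T1} Σ_{f∈T2} q_{ef} = Σ_{e∈T1} α_e + Σ_{f∈T2} β_f for every spanning tree T1 of K_m and every spanning tree T2 of K_n, if and only if there exist vectors a : E_m → ℝ and b : E_n → ℝ with q_{ef} = a_e + b_f for all e ∈ E_m, f ∈ E_n. -/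
/-- `T` is the edge set of a spanning tree of the complete graph on `Fin n`:
a set of `n - 1` non-loop edges such that the graph on `Fin n` with edge set `T`
is connected. -/
def IsSpanningTreeEdgeSet (n : ℕ) (T : Finset (Sym2 (Fin n))) : Prop :=
  (∀ e ∈ T, ¬ e.IsDiag) ∧ T.card = n - 1 ∧
    (SimpleGraph.fromEdgeSet (T : Set (Sym2 (Fin n)))).Connected

open Finset

namespace CopicAux

def baseT {n : ℕ} (u w : Fin n) : Finset (Sym2 (Fin n)) :=
  ((univ.erase w).erase u).image (fun x => s(w, x))

lemma mem_baseT {n : ℕ} {u w : Fin n} {e : Sym2 (Fin n)} :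
    e ∈ baseT u w ↔ ∃ x, x ≠ u ∧ x ≠ w ∧ e = s(w, x) := by
  simp only [baseT, mem_image, mem_erase, mem_univ, and_true]
  constructor
  · rintro ⟨x, ⟨hxu, hxw⟩, rfl⟩; exact ⟨x, hxu, hxw, rfl⟩
  · rintro ⟨x, hxu, hxw, rfl⟩; exact ⟨x, ⟨hxu, hxw⟩, rfl⟩

lemma card_baseT {n : ℕ} {u w : Fin n} (huw : u ≠ w) : (baseT u w).card = n - 2 := by
  rw [baseT, Finset.card_image_of_injOn]
  · rw [card_erase_of_mem (by simp [huw]), card_erase_of_mem (by simp)]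
    simp; omega
  · intro x hx y hy hxy
    simp only [mem_coe, mem_erase, mem_univ, and_true] at hx hy
    rcases Sym2.eq_iff.mp hxy with ⟨-, h⟩ | ⟨h1, h2⟩
    · exact h
    · exact absurd h1.symm hy.2

lemma uv_notMem_baseT {n : ℕ} {u v w : Fin n} (huw : u ≠ w) (hvw : v ≠ w) :
    s(u, v) ∉ baseT u w := by
  rw [mem_baseT]
  rintro ⟨x, hxu, hxw, h⟩
  rcases Sym2.eq_iff.mp h with ⟨h1, -⟩ | ⟨-, h2⟩
  · exact huw h1
  · exact hvw h2

lemma wu_notMem_baseT {n : ℕ} {u w : Fin n} (huw : u ≠ w) :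
    s(w, u) ∉ baseT u w := by
  rw [mem_baseT]
  rintro ⟨x, hxu, hxw, h⟩
  rcases Sym2.eq_iff.mp h with ⟨-, h2⟩ | ⟨h1, -⟩
  · exact hxu h2.symm
  · exact hxw h1.symm

lemma connected_aux {n : ℕ} (u v w : Fin n) (huv : u ≠ v) (hvw : v ≠ w)
    (T : Finset (Sym2 (Fin n))) (hTb : baseT u w ⊆ T) (hTuv : s(u, v) ∈ T) :
    (SimpleGraph.fromEdgeSet (T : Set (Sym2 (Fin n)))).Connected := by
  set G := SimpleGraph.fromEdgeSet (T : Set (Sym2 (Fin n))) with hG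
  have hadj : ∀ x : Fin n, x ≠ u → x ≠ w → G.Adj w x := by
    intro x hxu hxw
    exact (SimpleGraph.fromEdgeSet_adj _).mpr ⟨hTb (mem_baseT.mpr ⟨x, hxu, hxw, rfl⟩), Ne.symm hxw⟩
  have huvAdj : G.Adj u v := (SimpleGraph.fromEdgeSet_adj _).mpr ⟨hTuv, huv⟩
  have hreach : ∀ x : Fin n, G.Reachable w x := by
    intro x
    by_cases hxw : x = w
    · subst hxw; exact SimpleGraph.Reachable.refl _
    by_cases hxu : x = u
    · subst hxu
      exact ((hadj v (Ne.symm huv) hvw).reachable).trans huvAdj.symm.reachable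
    · exact (hadj x hxu hxw).reachable
  haveI : Nonempty (Fin n) := ⟨w⟩
  exact SimpleGraph.Connected.mk (fun a b => ((hreach a).symm).trans (hreach b))

lemma three_le {n : ℕ} (u v w : Fin n) (huv : u ≠ v) (huw : u ≠ w) (hvw : v ≠ w) :
    3 ≤ n := by
  have h3 : ({u, v, w} : Finset (Fin n)).card = 3 := by
    rw [card_insert_of_notMem (by simp [huv, huw]), card_pair hvw]
  calc 3 = ({u, v, w} : Finset (Fin n)).card := h3.symm
  _ ≤ (univ : Finset (Fin n)).card := card_le_univ _
  _ = n := by simp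

lemma mod_spanning {n : ℕ} (u v w : Fin n) (huv : u ≠ v) (huw : u ≠ w) (hvw : v ≠ w) :
    IsSpanningTreeEdgeSet n (insert s(u, v) (baseT u w)) := by
  have hn : 3 ≤ n := three_le u v w huv huw hvw
  refine ⟨?_, ?_, ?_⟩
  · intro e he
    rcases mem_insert.mp he with rfl | he
    · simpa using huv
    · obtain ⟨x, hxu, hxw, rfl⟩ := mem_baseT.mp he
      simpa using Ne.symm hxw
  · rw [card_insert_of_notMem (uv_notMem_baseT huw hvw), card_baseT huw]
    omega
  · exact connected_aux u v w huv hvw _ (subset_insert _ _) (mem_insert_self _ _)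

lemma star_spanning {n : ℕ} (u v w : Fin n) (huv : u ≠ v) (huw : u ≠ w) (hvw : v ≠ w) :
    IsSpanningTreeEdgeSet n (insert s(w, u) (baseT u w)) := by
  have hn : 3 ≤ n := three_le u v w huv huw hvw
  refine ⟨?_, ?_, ?_⟩
  · intro e he
    rcases mem_insert.mp he with rfl | he
    · simpa using Ne.symm huw
    · obtain ⟨x, hxu, hxw, rfl⟩ := mem_baseT.mp he
      simpa using Ne.symm hxw
  · rw [card_insert_of_notMem (wu_notMem_baseT huw), card_baseT huw]
    omega
  · set G := SimpleGraph.fromEdgeSet ((insert s(w, u) (baseT u w) : Finset (Sym2 (Fin n))) : Set (Sym2 (Fin n)))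
    have hmem : ∀ x : Fin n, x ≠ u → x ≠ w →
        s(w, x) ∈ ((insert s(w, u) (baseT u w) : Finset (Sym2 (Fin n))) : Set (Sym2 (Fin n))) := by
      intro x hxu hxw
      simp only [coe_insert, Set.mem_insert_iff, mem_coe]
      exact Or.inr (mem_baseT.mpr ⟨x, hxu, hxw, rfl⟩)
    have hreach : ∀ x : Fin n, G.Reachable w x := by
      intro x
      by_cases hxw : x = w
      · subst hxw; exact SimpleGraph.Reachable.refl _
      by_cases hxu : x = u
      · subst hxu
        exact ((SimpleGraph.fromEdgeSet_adj _).mpr ⟨by simp, Ne.symm huw⟩).reachable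
      · exact ((SimpleGraph.fromEdgeSet_adj _).mpr ⟨hmem x hxu hxw, Ne.symm hxw⟩).reachable
    haveI : Nonempty (Fin n) := ⟨w⟩
    exact SimpleGraph.Connected.mk (fun a b => ((hreach a).symm).trans (hreach b))

lemma L1 {n : ℕ} (g : Sym2 (Fin n) → ℝ) (C : ℝ)
    (h : ∀ T, IsSpanningTreeEdgeSet n T → ∑ f ∈ T, g f = C)
    (u v w : Fin n) (huv : u ≠ v) (huw : u ≠ w) (hvw : v ≠ w) :
    g s(u, v) = g s(u, w) := by
  have h1 := h _ (mod_spanning u v w huv huw hvw)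
  have h2 := h _ (star_spanning u v w huv huw hvw)
  rw [Finset.sum_insert (uv_notMem_baseT huw hvw)] at h1
  rw [Finset.sum_insert (wu_notMem_baseT huw)] at h2
  calc g s(u, v) = g s(w, u) := by linarith
  _ = g s(u, w) := by rw [Sym2.eq_swap]

lemma L2 {n : ℕ} (g : Sym2 (Fin n) → ℝ) (C : ℝ)
    (h : ∀ T, IsSpanningTreeEdgeSet n T → ∑ f ∈ T, g f = C) :
    ∀ f f' : Sym2 (Fin n), ¬ f.IsDiag → ¬ f'.IsDiag → g f = g f' := by
  intro f f'
  induction f using Sym2.inductionOn with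
  | hf u v =>
    induction f' using Sym2.inductionOn with
    | hf x y =>
      intro hf hf'
      rw [Sym2.mk_isDiag_iff] at hf hf'
      by_cases hux : u = x
      · subst hux
        by_cases hvy : v = y
        · subst hvy; rfl
        · exact L1 g C h u v y hf hf' hvy
      · by_cases huy : u = y
        · subst huy
          by_cases hvx : v = x
          · subst hvx; rw [Sym2.eq_swap]
          · rw [L1 g C h u v x hf hux hvx, Sym2.eq_swap]
        · by_cases hvx : v = x
          · subst hvx
            rw [Sym2.eq_swap]
            exact L1 g C h v u y (Ne.symm hf) hf' huy
          · by_cases hvy : v = y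
            · subst hvy
              rw [Sym2.eq_swap, L1 g C h v u x (Ne.symm hf) hvx hux, Sym2.eq_swap]
            · rw [L1 g C h u v x hf hux hvx, Sym2.eq_swap,
                L1 g C h x u y (Ne.symm hux) hf' huy]

end CopicAux

/-- Linearizability characterization for `COPIC(B(M(K_m)), B(M(K_n)), Q, c, d)`:
`Q` is linearizable with respect to pairs of spanning trees of complete graphs
if and only if `q_{ef} = a_e + b_f`. -/
theorem copic_trees_trees_linearizable_iff
    (m n : ℕ) (hm : 3 ≤ m) (hn : 3 ≤ n)
    (Q : Sym2 (Fin m) → Sym2 (Fin n) → ℝ) :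
    (∃ (α : Sym2 (Fin m) → ℝ) (β : Sym2 (Fin n) → ℝ),
      ∀ T1 : Finset (Sym2 (Fin m)), IsSpanningTreeEdgeSet m T1 →
      ∀ T2 : Finset (Sym2 (Fin n)), IsSpanningTreeEdgeSet n T2 →
        ∑ e ∈ T1, ∑ f ∈ T2, Q e f = ∑ e ∈ T1, α e + ∑ f ∈ T2, β f) ↔
    (∃ (a : Sym2 (Fin m) → ℝ) (b : Sym2 (Fin n) → ℝ),
      ∀ (e : Sym2 (Fin m)) (f : Sym2 (Fin n)),
        ¬ e.IsDiag → ¬ f.IsDiag → Q e f = a e + b f) := by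
  constructor
  · rintro ⟨α, β, H⟩
    -- there exists at least one spanning tree of K_m (used implicitly); step 1:
    have step1 : ∀ T2, IsSpanningTreeEdgeSet n T2 →
        ∀ e e' : Sym2 (Fin m), ¬ e.IsDiag → ¬ e'.IsDiag →
        (∑ f ∈ T2, Q e f) - α e = (∑ f ∈ T2, Q e' f) - α e' := by
      intro T2 hT2 e e' he he'
      refine CopicAux.L2 (fun e => (∑ f ∈ T2, Q e f) - α e) (∑ f ∈ T2, β f) ?_ e e' he he'
      intro T1 hT1
      have hH := H T1 hT1 T2 hT2
      rw [Finset.sum_sub_distrib]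
      linarith
    have step2 : ∀ (e e' : Sym2 (Fin m)), ¬ e.IsDiag → ¬ e'.IsDiag →
        ∀ (f f' : Sym2 (Fin n)), ¬ f.IsDiag → ¬ f'.IsDiag →
          Q e f - Q e' f = Q e f' - Q e' f' := by
      intro e e' he he'
      refine CopicAux.L2 (fun f => Q e f - Q e' f) (α e - α e') ?_
      intro T2 hT2
      have hs := step1 T2 hT2 e e' he he'
      rw [Finset.sum_sub_distrib]
      linarith
    have h0m : (⟨0, by omega⟩ : Fin m) ≠ ⟨1, by omega⟩ := by simp [Fin.ext_iff]
    have h0n : (⟨0, by omega⟩ : Fin n) ≠ ⟨1, by omega⟩ := by simp [Fin.ext_iff]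
    set e0 : Sym2 (Fin m) := s(⟨0, by omega⟩, ⟨1, by omega⟩) with he0
    set f0 : Sym2 (Fin n) := s(⟨0, by omega⟩, ⟨1, by omega⟩) with hf0
    have he0d : ¬ e0.IsDiag := by rw [he0, Sym2.mk_isDiag_iff]; exact h0m
    have hf0d : ¬ f0.IsDiag := by rw [hf0, Sym2.mk_isDiag_iff]; exact h0n
    refine ⟨fun e => Q e f0, fun f => Q e0 f - Q e0 f0, ?_⟩
    intro e f he hf
    have hr := step2 e e0 he he0d f f0 hf hf0d
    dsimp only
    linarith
  · rintro ⟨a, b, hab⟩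
    refine ⟨fun e => ((n : ℝ) - 1) * a e, fun f => ((m : ℝ) - 1) * b f, ?_⟩
    intro T1 hT1 T2 hT2
    obtain ⟨hT1d, hT1c, -⟩ := hT1
    obtain ⟨hT2d, hT2c, -⟩ := hT2
    have hT1c' : (T1.card : ℝ) = (m : ℝ) - 1 := by
      rw [hT1c, Nat.cast_sub (by omega)]; simp
    have hT2c' : (T2.card : ℝ) = (n : ℝ) - 1 := by
      rw [hT2c, Nat.cast_sub (by omega)]; simp
    have h1 : ∑ e ∈ T1, ∑ f ∈ T2, Q e f = ∑ e ∈ T1, ∑ f ∈ T2, (a e + b f) := by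
      refine Finset.sum_congr rfl fun e he => Finset.sum_congr rfl fun f hf => ?_
      exact hab e f (hT1d e he) (hT2d f hf)
    rw [h1]
    simp only [Finset.sum_add_distrib, Finset.sum_const, nsmul_eq_mul, hT1c', hT2c']
    rw [Finset.mul_sum]
end

section
/- Let m ≥ 2 and n ≥ 3, let E_n denote the edge set of the complete graph K_n, and let Q = (q_{ije}) be a real array indexed by (i,j) ∈ [m]×[m] and e ∈ E_n. Then there exist an array C = (c_{ij}) ∈ ℝ^{m×m} and a vector D : E_n → ℝ such that Σ_{i=1}^{m} Σ_{e∈T} q_{i,σ(i),e} = Σ_{i=1}^{m} c_{i,σ(i)} + Σ_{e∈T} D_e for every permutation σ of [m] and every spanning tree T of K_n, if and only if there exist arrays A = (a_{ij}) ∈ ℝ^{m×m}, B = (b_{ie}) and C' = (c'_{je}) (with i,j ∈ [m], e ∈ E_n) such that q_{ije} = a_{ij} + b_{ie} + c'_{je} for all i, j ∈ [m] and e ∈ E_n. -/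
open Finset

def starT (n : ℕ) (a : Fin n) : Finset (Sym2 (Fin n)) :=
  (Finset.univ.erase a).image (fun u => s(a, u))

lemma mem_starT {n : ℕ} {a : Fin n} {e : Sym2 (Fin n)} :
    e ∈ starT n a ↔ ∃ u, u ≠ a ∧ s(a, u) = e := by
  simp [starT]

lemma sab_mem_starT {n : ℕ} {a b : Fin n} (h : b ≠ a) : s(a, b) ∈ starT n a :=
  mem_starT.2 ⟨b, h, rfl⟩

lemma starT_spanning {n : ℕ} (a : Fin n) :
    IsSpanningTreeEdgeSet n (starT n a) := by
  refine ⟨?_, ?_, ?_⟩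
  · intro e he
    obtain ⟨u, hu, rfl⟩ := mem_starT.1 he
    simp [Ne.symm hu]
  · rw [starT, Finset.card_image_of_injOn, Finset.card_erase_of_mem (Finset.mem_univ a)]
    · simp
    · intro u _ v _ h
      exact Sym2.congr_right.1 h
  · rw [SimpleGraph.connected_iff]
    refine ⟨?_, ⟨a⟩⟩
    intro x y
    have key : ∀ z : Fin n,
        (SimpleGraph.fromEdgeSet ((starT n a : Set (Sym2 (Fin n))))).Reachable z a := by
      intro z
      rcases eq_or_ne z a with rfl | hz
      · exact SimpleGraph.Reachable.refl _
      · refine SimpleGraph.Adj.reachable ?_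
        rw [SimpleGraph.fromEdgeSet_adj]
        refine ⟨?_, hz⟩
        have : s(z, a) = s(a, z) := Sym2.eq_swap
        rw [this]
        exact_mod_cast sab_mem_starT hz
    exact (key x).trans (key y).symm

def swapT (n : ℕ) (a b c : Fin n) : Finset (Sym2 (Fin n)) :=
  insert s(b, c) ((starT n a).erase s(a, b))

lemma sbc_notMem_starT {n : ℕ} {a b c : Fin n} (hab : a ≠ b) (hac : a ≠ c) :
    s(b, c) ∉ starT n a := by
  intro h
  obtain ⟨u, hu, he⟩ := mem_starT.1 h
  rw [Sym2.eq_iff] at he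
  rcases he with ⟨h1, _⟩ | ⟨h2, _⟩
  · exact hab h1
  · exact hac h2

lemma sau_mem_swapT {n : ℕ} {a b c u : Fin n} (hu : u ≠ a) (hub : u ≠ b) :
    s(a, u) ∈ swapT n a b c := by
  refine Finset.mem_insert_of_mem (Finset.mem_erase.2 ⟨?_, sab_mem_starT hu⟩)
  intro h
  exact hub (Sym2.congr_right.1 h)

lemma swapT_spanning {n : ℕ} (hn : 2 ≤ n) (a b c : Fin n)
    (hab : a ≠ b) (hbc : b ≠ c) (hac : a ≠ c) :
    IsSpanningTreeEdgeSet n (swapT n a b c) := by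
  refine ⟨?_, ?_, ?_⟩
  · intro e he
    rcases Finset.mem_insert.1 he with rfl | he'
    · simp [hbc]
    · exact (starT_spanning a).1 e (Finset.mem_of_mem_erase he')
  · rw [swapT, Finset.card_insert_of_notMem, Finset.card_erase_of_mem
      (sab_mem_starT (Ne.symm hab)), (starT_spanning a).2.1]
    · omega
    · intro h
      exact sbc_notMem_starT hab hac (Finset.mem_of_mem_erase h)
  · rw [SimpleGraph.connected_iff]
    refine ⟨?_, ⟨a⟩⟩
    intro x y
    have hca : (SimpleGraph.fromEdgeSet ((swapT n a b c : Set (Sym2 (Fin n))))).Reachable c a := by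
      refine SimpleGraph.Adj.reachable ?_
      rw [SimpleGraph.fromEdgeSet_adj]
      refine ⟨?_, Ne.symm hac⟩
      have : s(c, a) = s(a, c) := Sym2.eq_swap
      rw [this]
      exact_mod_cast sau_mem_swapT (Ne.symm hac) (Ne.symm hbc)
    have key : ∀ z : Fin n,
        (SimpleGraph.fromEdgeSet ((swapT n a b c : Set (Sym2 (Fin n))))).Reachable z a := by
      intro z
      rcases eq_or_ne z a with rfl | hz
      · exact SimpleGraph.Reachable.refl _
      rcases eq_or_ne z b with rfl | hzb
      · refine SimpleGraph.Reachable.trans ?_ hca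
        refine SimpleGraph.Adj.reachable ?_
        rw [SimpleGraph.fromEdgeSet_adj]
        exact ⟨by exact_mod_cast Finset.mem_insert_self _ _, hbc⟩
      · refine SimpleGraph.Adj.reachable ?_
        rw [SimpleGraph.fromEdgeSet_adj]
        refine ⟨?_, hz⟩
        have : s(z, a) = s(a, z) := Sym2.eq_swap
        rw [this]
        exact_mod_cast sau_mem_swapT hz hzb
    exact (key x).trans (key y).symm

/-- Linearizability characterization for `COPIC(PM(K_{m,m}), B(M(K_n)), Q, c, d)`:
`Q` is linearizable with respect to perfect matchings (permutations of `[m]`)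
and spanning trees of `K_n` if and only if `q_{ije} = a_{ij} + b_{ie} + c'_{je}`. -/
theorem copic_matchings_trees_linearizable_iff
    (m n : ℕ) (hm : 2 ≤ m) (hn : 3 ≤ n)
    (Q : Fin m → Fin m → Sym2 (Fin n) → ℝ) :
    (∃ (C : Fin m → Fin m → ℝ) (D : Sym2 (Fin n) → ℝ),
      ∀ (σ : Equiv.Perm (Fin m)) (T : Finset (Sym2 (Fin n))),
        IsSpanningTreeEdgeSet n T →
        ∑ i : Fin m, ∑ e ∈ T, Q i (σ i) e
          = ∑ i : Fin m, C i (σ i) + ∑ e ∈ T, D e) ↔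
    (∃ (A : Fin m → Fin m → ℝ) (B : Fin m → Sym2 (Fin n) → ℝ)
       (C' : Fin m → Sym2 (Fin n) → ℝ),
      ∀ (i j : Fin m) (e : Sym2 (Fin n)), ¬ e.IsDiag →
        Q i j e = A i j + B i e + C' j e) := by
  constructor
  · rintro ⟨C, D, h⟩
    -- Step 1: tree sums of R are independent of the tree.
    have treeSum : ∀ (σ : Equiv.Perm (Fin m)) (T : Finset (Sym2 (Fin n))),
        IsSpanningTreeEdgeSet n T →
        ∑ e ∈ T, (∑ i, Q i (σ i) e - ∑ i, Q i i e)
          = ∑ i, C i (σ i) - ∑ i, C i i := by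
      intro σ T hT
      have h1 := h σ T hT
      have h2 := h 1 T hT
      simp only [Equiv.Perm.one_apply] at h2
      have c1 : ∑ e ∈ T, ∑ i, Q i (σ i) e = ∑ i, ∑ e ∈ T, Q i (σ i) e := Finset.sum_comm
      have c2 : ∑ e ∈ T, ∑ i, Q i i e = ∑ i, ∑ e ∈ T, Q i i e := Finset.sum_comm
      rw [Finset.sum_sub_distrib, c1, c2, h1, h2]
      ring
    -- Step 2: exchange along one edge.
    have Rstep : ∀ (σ : Equiv.Perm (Fin m)) (a b c : Fin n), a ≠ b → b ≠ c → a ≠ c →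
        (∑ i, Q i (σ i) s(a, b) - ∑ i, Q i i s(a, b))
          = (∑ i, Q i (σ i) s(b, c) - ∑ i, Q i i s(b, c)) := by
      intro σ a b c hab hbc hac
      have t1 := treeSum σ (starT n a) (starT_spanning a)
      have t2 := treeSum σ (swapT n a b c) (swapT_spanning (by omega) a b c hab hbc hac)
      have e1 : ∑ e ∈ (starT n a).erase s(a, b), (∑ i, Q i (σ i) e - ∑ i, Q i i e)
            + (∑ i, Q i (σ i) s(a, b) - ∑ i, Q i i s(a, b))
          = ∑ e ∈ starT n a, (∑ i, Q i (σ i) e - ∑ i, Q i i e) :=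
        Finset.sum_erase_add _ _ (sab_mem_starT (Ne.symm hab))
      have e2 : ∑ e ∈ swapT n a b c, (∑ i, Q i (σ i) e - ∑ i, Q i i e)
          = (∑ i, Q i (σ i) s(b, c) - ∑ i, Q i i s(b, c))
            + ∑ e ∈ (starT n a).erase s(a, b), (∑ i, Q i (σ i) e - ∑ i, Q i i e) := by
        rw [swapT]
        exact Finset.sum_insert
          (fun hmem => sbc_notMem_starT hab hac (Finset.mem_of_mem_erase hmem))
      linarith
    -- Step 3: R is constant on non-diagonal edges.
    have Rconst : ∀ (σ : Equiv.Perm (Fin m)) (e e' : Sym2 (Fin n)),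
        ¬e.IsDiag → ¬e'.IsDiag →
        (∑ i, Q i (σ i) e - ∑ i, Q i i e) = (∑ i, Q i (σ i) e' - ∑ i, Q i i e') := by
      intro σ e e' he he'
      induction e using Sym2.ind with | _ u v => ?_
      induction e' using Sym2.ind with | _ x y => ?_
      rw [Sym2.mk_isDiag_iff] at he he'
      rcases eq_or_ne v x with rfl | hvx
      · rcases eq_or_ne u y with rfl | huy
        · have hsw : s(u, v) = s(v, u) := Sym2.eq_swap
          rw [hsw]
        · exact Rstep σ u v y he he' huy
      rcases eq_or_ne v y with rfl | hvy
      · rcases eq_or_ne u x with rfl | hux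
        · rfl
        · have h1 := Rstep σ u v x he hvx hux
          have hsw : s(v, x) = s(x, v) := Sym2.eq_swap
          rw [h1, hsw]
      rcases eq_or_ne u x with rfl | hux
      · have hsw : s(u, v) = s(v, u) := Sym2.eq_swap
        rw [hsw]
        exact Rstep σ v u y (Ne.symm he) he' hvy
      rcases eq_or_ne u y with rfl | huy
      · have hsw : s(u, v) = s(v, u) := Sym2.eq_swap
        have hsw2 : s(x, u) = s(u, x) := Sym2.eq_swap
        rw [hsw, hsw2]
        exact Rstep σ v u x (Ne.symm he) hux hvx
      · have h1 := Rstep σ u v x he hvx hux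
        have h2 := Rstep σ v x y hvx he' hvy
        rw [h1, h2]
    -- Reference edge and index.
    set z : Fin m := ⟨0, by omega⟩ with hzdef
    set e₀ : Sym2 (Fin n) := s(⟨0, by omega⟩, ⟨1, by omega⟩) with he₀def
    have he₀ : ¬ e₀.IsDiag := by
      rw [he₀def, Sym2.mk_isDiag_iff]
      simp [Fin.ext_iff]
    -- Step 4: permutation sums of Y are constant.
    have Ysum : ∀ (e : Sym2 (Fin n)), ¬e.IsDiag → ∀ (σ : Equiv.Perm (Fin m)),
        ∑ i, (Q i (σ i) e - Q i (σ i) e₀) = ∑ i, (Q i i e - Q i i e₀) := by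
      intro e he σ
      have h1 := Rconst σ e e₀ he he₀
      rw [Finset.sum_sub_distrib, Finset.sum_sub_distrib]
      linarith
    -- Step 5: rectangle identity.
    have rect : ∀ (e : Sym2 (Fin n)), ¬e.IsDiag → ∀ i j : Fin m,
        (Q i j e - Q i j e₀) + (Q z z e - Q z z e₀)
          = (Q i z e - Q i z e₀) + (Q z j e - Q z j e₀) := by
      intro e he i j
      rcases eq_or_ne i z with rfl | hi
      · ring
      rcases eq_or_ne j z with rfl | hj
      · ring
      set σ : Equiv.Perm (Fin m) := Equiv.swap i j with hσ
      set σ' : Equiv.Perm (Fin m) := σ.trans (Equiv.swap j z) with hσ'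
      have hσz : σ z = z := Equiv.swap_apply_of_ne_of_ne (Ne.symm hi) (Ne.symm hj)
      have hσi : σ i = j := Equiv.swap_apply_left i j
      have hσ'z : σ' z = j := by
        rw [hσ', Equiv.trans_apply, hσz]
        exact Equiv.swap_apply_right j z
      have hσ'i : σ' i = z := by
        rw [hσ', Equiv.trans_apply, hσi]
        exact Equiv.swap_apply_left j z
      have h1 := Ysum e he σ
      have h2 := Ysum e he σ'
      have h12 : ∑ k, ((Q k (σ k) e - Q k (σ k) e₀) - (Q k (σ' k) e - Q k (σ' k) e₀)) = 0 := by
        rw [Finset.sum_sub_distrib, h1, h2]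
        ring
      have hzero : ∀ k ∈ Finset.univ, k ∉ ({z, i} : Finset (Fin m)) →
          ((Q k (σ k) e - Q k (σ k) e₀) - (Q k (σ' k) e - Q k (σ' k) e₀)) = 0 := by
        intro k _ hk
        rw [Finset.mem_insert, Finset.mem_singleton] at hk
        push_neg at hk
        have hk1 : σ k ≠ j := fun hh => hk.2 (σ.injective (hh.trans hσi.symm))
        have hk2 : σ k ≠ z := fun hh => hk.1 (σ.injective (hh.trans hσz.symm))
        have hfix : σ' k = σ k := by
          rw [hσ', Equiv.trans_apply]
          exact Equiv.swap_apply_of_ne_of_ne hk1 hk2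
        rw [hfix]
        ring
      have hpair := Finset.sum_subset (Finset.subset_univ ({z, i} : Finset (Fin m))) hzero
      rw [Finset.sum_pair (Ne.symm hi), h12] at hpair
      rw [hσz, hσ'z, hσi, hσ'i] at hpair
      linarith
    refine ⟨fun i j => Q i j e₀, fun i e => Q i z e - Q i z e₀,
      fun j e => (Q z j e - Q z j e₀) - (Q z z e - Q z z e₀), ?_⟩
    intro i j e he
    have := rect e he i j
    dsimp only
    linarith
  · rintro ⟨A, B, C', hq⟩
    refine ⟨fun i j => ((n - 1 : ℕ) : ℝ) * A i j,
      fun e => (∑ i, B i e) + ∑ j, C' j e, ?_⟩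
    intro σ T hT
    have hcard := hT.2.1
    have hb : ∑ i, ∑ e ∈ T, B i e = ∑ e ∈ T, ∑ i, B i e := Finset.sum_comm
    have hc : ∑ i, ∑ e ∈ T, C' (σ i) e = ∑ e ∈ T, ∑ j, C' j e := by
      rw [Finset.sum_comm]
      exact Finset.sum_congr rfl fun e _ => Equiv.sum_comp σ (fun j => C' j e)
    calc ∑ i, ∑ e ∈ T, Q i (σ i) e
        = ∑ i, ∑ e ∈ T, (A i (σ i) + B i e + C' (σ i) e) := by
          refine Finset.sum_congr rfl fun i _ => Finset.sum_congr rfl fun e heT => ?_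
          exact hq i (σ i) e (hT.1 e heT)
      _ = ∑ i, (((n - 1 : ℕ) : ℝ) * A i (σ i)) + (∑ i, ∑ e ∈ T, B i e
            + ∑ i, ∑ e ∈ T, C' (σ i) e) := by
          rw [← Finset.sum_add_distrib, ← Finset.sum_add_distrib]
          refine Finset.sum_congr rfl fun i _ => ?_
          rw [Finset.sum_add_distrib, Finset.sum_add_distrib, Finset.sum_const, hcard,
            nsmul_eq_mul]
          ring
      _ = ∑ i, (((n - 1 : ℕ) : ℝ) * A i (σ i))
            + ∑ e ∈ T, ((∑ i, B i e) + ∑ j, C' j e) := by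
          rw [hb, hc, ← Finset.sum_add_distrib]
end

section
/- Let m ≥ 2, let n and k be integers with 1 ≤ k < n, and let Q = (q_{ijl}) be a real array indexed by (i,j) ∈ [m]×[m] and l ∈ [n]. Then there exist an array C = (c_{ij}) ∈ ℝ^{m×m} and a vector β ∈ ℝ^n such that Σ_{i=1}^{m} Σ_{l∈S} q_{i,σ(i),l} = Σ_{i=1}^{m} c_{i,σ(i)} + Σ_{l∈S} β_l for every permutation σ of [m] and every k-element subset S of [n], if and only if there exist arrays A = (a_{ij}) ∈ ℝ^{m×m}, B = (b_{il}) and C' = (c'_{jl}) (with i,j ∈ [m], l ∈ [n]) such that q_{ijl} = a_{ij} + b_{il} + c'_{jl} for all i, j ∈ [m] and l ∈ [n]. -/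
/-- Rectangle relation for matrices with constant matching sums. -/
lemma copic_rect {m : ℕ} (M : Fin m → Fin m → ℝ) (K : ℝ)
    (h : ∀ σ : Equiv.Perm (Fin m), ∑ i, M i (σ i) = K)
    {i i' : Fin m} (hii : i ≠ i') (j j' : Fin m) :
    M i j + M i' j' = M i j' + M i' j := by
  by_cases hjj : j = j'
  · subst hjj; ring
  · set c : Equiv.Perm (Fin m) := Equiv.swap i j with hc
    have hci : c i = j := Equiv.swap_apply_left i j
    have hcij : c i' ≠ j := by
      intro hcj
      apply hii
      have : c (c i') = c j := congrArg c hcj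
      rw [Equiv.swap_apply_self, Equiv.swap_apply_right] at this
      exact this.symm
    set σ : Equiv.Perm (Fin m) := (Equiv.swap j' (c i')) * c with hσ
    have hσi : σ i = j := by
      rw [hσ, Equiv.Perm.mul_apply, hci,
        Equiv.swap_apply_of_ne_of_ne hjj (fun hh => hcij hh.symm)]
    have hσi' : σ i' = j' := by
      rw [hσ, Equiv.Perm.mul_apply, Equiv.swap_apply_right]
    set σ₂ : Equiv.Perm (Fin m) := σ * Equiv.swap i i' with hσ₂
    have hσ₂i : σ₂ i = j' := by
      rw [hσ₂, Equiv.Perm.mul_apply, Equiv.swap_apply_left, hσi']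
    have hσ₂i' : σ₂ i' = j := by
      rw [hσ₂, Equiv.Perm.mul_apply, Equiv.swap_apply_right, hσi]
    have e : ∑ t, (M t (σ₂ t) - M t (σ t)) = 0 := by
      rw [Finset.sum_sub_distrib, h σ₂, h σ, sub_self]
    have e2 : ∑ t, (M t (σ₂ t) - M t (σ t))
        = (M i (σ₂ i) - M i (σ i)) + (M i' (σ₂ i') - M i' (σ i')) := by
      rw [← Finset.sum_pair (f := fun t => M t (σ₂ t) - M t (σ t)) hii]
      refine (Finset.sum_subset (Finset.subset_univ _) ?_).symm
      intro t _ ht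
      simp only [Finset.mem_insert, Finset.mem_singleton, not_or] at ht
      have : σ₂ t = σ t := by
        rw [hσ₂, Equiv.Perm.mul_apply, Equiv.swap_apply_of_ne_of_ne ht.1 ht.2]
      rw [this, sub_self]
    rw [e2, hσi, hσi', hσ₂i, hσ₂i'] at e
    linarith

/-- A matrix with constant matching sums splits as a row term plus a column term. -/
lemma copic_decomp {m : ℕ} (hm : 2 ≤ m) (M : Fin m → Fin m → ℝ) (K : ℝ)
    (h : ∀ σ : Equiv.Perm (Fin m), ∑ i, M i (σ i) = K) :
    ∃ u v : Fin m → ℝ, ∀ i j, M i j = u i + v j := by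
  have hmpos : 0 < m := by omega
  set z : Fin m := ⟨0, hmpos⟩ with hz
  refine ⟨fun i => M i z - M z z, fun j => M z j, ?_⟩
  intro i j
  show M i j = (M i z - M z z) + M z j
  by_cases hi : i = z
  · subst hi; ring
  · have := copic_rect M K h hi j z
    linarith

/-- Linearizability characterization for `COPIC(PM(K_{m,m}), B(U_{n,k}), Q, c, d)`:
`Q` is linearizable with respect to perfect matchings (permutations of `[m]`)
and `k`-subsets of `[n]` if and only if `q_{ijl} = a_{ij} + b_{il} + c'_{jl}`. -/
theorem copic_matchings_uniform_linearizable_iff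
    (m n k : ℕ) (hm : 2 ≤ m) (hk : 1 ≤ k) (hkn : k < n)
    (Q : Fin m → Fin m → Fin n → ℝ) :
    (∃ (C : Fin m → Fin m → ℝ) (β : Fin n → ℝ),
      ∀ (σ : Equiv.Perm (Fin m)) (S : Finset (Fin n)), S.card = k →
        ∑ i : Fin m, ∑ l ∈ S, Q i (σ i) l
          = ∑ i : Fin m, C i (σ i) + ∑ l ∈ S, β l) ↔
    (∃ (A : Fin m → Fin m → ℝ) (B : Fin m → Fin n → ℝ) (C' : Fin m → Fin n → ℝ),
      ∀ (i j : Fin m) (l : Fin n), Q i j l = A i j + B i l + C' j l) := by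
  have hnpos : 0 < n := by omega
  have hkR : (k : ℝ) ≠ 0 := by positivity
  constructor
  · rintro ⟨C, β, H⟩
    set l₀ : Fin n := ⟨0, hnpos⟩ with hl₀
    -- Step 1: for each l, Q · · l - Q · · l₀ has constant matching sums.
    have hD : ∀ l : Fin n, ∃ u v : Fin m → ℝ,
        ∀ i j, Q i j l - Q i j l₀ = u i + v j := by
      intro l
      by_cases hl : l = l₀
      · exact ⟨0, 0, by simp [hl]⟩
      · -- find S of card k with l ∈ S, l₀ ∉ S
        obtain ⟨S, hlS, hSsub, hScard⟩ :=
          Finset.exists_subsuperset_card_eq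
            (t := (Finset.univ : Finset (Fin n)).erase l₀) (s := {l})
            (by simp [Finset.mem_erase, hl])
            (by simpa using hk)
            (by rw [Finset.card_erase_of_mem (Finset.mem_univ _)]; simp; omega)
        have hlmem : l ∈ S := hlS (Finset.mem_singleton_self l)
        have hl₀S : l₀ ∉ S := fun hmem => by
          have := hSsub hmem; simp [Finset.mem_erase] at this
        set S' : Finset (Fin n) := insert l₀ (S.erase l) with hS'
        have hl₀e : l₀ ∉ S.erase l := fun hmem => hl₀S (Finset.mem_of_mem_erase hmem)
        have hS'card : S'.card = k := by
          rw [hS', Finset.card_insert_of_notMem hl₀e,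
            Finset.card_erase_of_mem hlmem, hScard]
          omega
        have hdiff : ∀ i j, (∑ t ∈ S, Q i j t) - (∑ t ∈ S', Q i j t)
            = Q i j l - Q i j l₀ := by
          intro i j
          rw [← Finset.add_sum_erase S _ hlmem, hS',
            Finset.sum_insert hl₀e]
          ring
        refine copic_decomp hm _ (∑ t ∈ S, β t - ∑ t ∈ S', β t) ?_
        intro σ
        have h1 := H σ S hScard
        have h2 := H σ S' hS'card
        calc ∑ i, (Q i (σ i) l - Q i (σ i) l₀)
            = ∑ i, ((∑ t ∈ S, Q i (σ i) t) - (∑ t ∈ S', Q i (σ i) t)) := by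
              refine Finset.sum_congr rfl fun i _ => (hdiff i (σ i)).symm
          _ = (∑ i, ∑ t ∈ S, Q i (σ i) t) - (∑ i, ∑ t ∈ S', Q i (σ i) t) :=
              Finset.sum_sub_distrib _ _
          _ = ∑ t ∈ S, β t - ∑ t ∈ S', β t := by rw [h1, h2]; ring
    choose u v hu using hD
    -- Step 2: a fixed k-subset S₀ containing l₀.
    obtain ⟨S₀, hl₀S₀, _, hS₀card⟩ :=
      Finset.exists_subsuperset_card_eq
        (t := (Finset.univ : Finset (Fin n))) (s := {l₀})
        (Finset.subset_univ _) (by simpa using hk) (by simp; omega)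
    have hP : ∃ u' v' : Fin m → ℝ,
        ∀ i j, (∑ t ∈ S₀, Q i j t) - C i j = u' i + v' j := by
      refine copic_decomp hm _ (∑ t ∈ S₀, β t) ?_
      intro σ
      have h1 := H σ S₀ hS₀card
      rw [Finset.sum_sub_distrib, h1]
      ring
    obtain ⟨u', v', hu'⟩ := hP
    -- Step 3: assemble.
    refine ⟨fun i j => C i j / k,
      fun i l => (u' i - ∑ t ∈ S₀, u t i) / k + u l i,
      fun j l => (v' j - ∑ t ∈ S₀, v t j) / k + v l j, ?_⟩
    intro i j l
    have key : (∑ t ∈ S₀, Q i j t)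
        = k * Q i j l₀ + (∑ t ∈ S₀, u t i) + (∑ t ∈ S₀, v t j) := by
      have : ∀ t ∈ S₀, Q i j t = Q i j l₀ + u t i + v t j := by
        intro t _
        have := hu t i j
        linarith
      rw [Finset.sum_congr rfl this, Finset.sum_add_distrib,
        Finset.sum_add_distrib, Finset.sum_const, hS₀card, nsmul_eq_mul]
    have h2 := hu' i j
    have h3 := hu l i j
    -- Q i j l₀ = (C i j + u' i + v' j - Σu - Σv)/k
    have hQ0 : (k : ℝ) * Q i j l₀
        = C i j + u' i + v' j - (∑ t ∈ S₀, u t i) - (∑ t ∈ S₀, v t j) := by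
      linarith
    have : (k : ℝ) * Q i j l = (k : ℝ) * Q i j l₀ + k * (u l i) + k * (v l j) := by
      have := hu l i j; ring_nf; nlinarith [hu l i j]
    field_simp
    nlinarith [hQ0, hu l i j]
  · rintro ⟨A, B, C', hABC⟩
    refine ⟨fun i j => (k : ℝ) * A i j,
      fun l => (∑ i, B i l) + (∑ j, C' j l), ?_⟩
    intro σ S hS
    calc ∑ i, ∑ l ∈ S, Q i (σ i) l
        = ∑ i, ∑ l ∈ S, (A i (σ i) + B i l + C' (σ i) l) := by
          refine Finset.sum_congr rfl fun i _ => Finset.sum_congr rfl fun l _ => hABC i (σ i) l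
      _ = ∑ i, ((k : ℝ) * A i (σ i) + ((∑ l ∈ S, B i l) + ∑ l ∈ S, C' (σ i) l)) := by
          refine Finset.sum_congr rfl fun i _ => ?_
          rw [Finset.sum_add_distrib, Finset.sum_add_distrib, Finset.sum_const, hS,
            nsmul_eq_mul]
          ring
      _ = ∑ i, (k : ℝ) * A i (σ i) + ((∑ i, ∑ l ∈ S, B i l) + ∑ i, ∑ l ∈ S, C' (σ i) l) := by
          rw [Finset.sum_add_distrib, Finset.sum_add_distrib]
      _ = ∑ i, (k : ℝ) * A i (σ i) + ∑ l ∈ S, ((∑ i, B i l) + (∑ j, C' j l)) := by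
          rw [Finset.sum_comm]
          have : ∑ i, ∑ l ∈ S, C' (σ i) l = ∑ l ∈ S, ∑ j, C' j l := by
            rw [Finset.sum_comm]
            refine Finset.sum_congr rfl fun l _ => ?_
            exact Equiv.sum_comp σ fun j => C' j l
          rw [this, Finset.sum_add_distrib]
end

section
/- Let n be a positive integer and a, c, d ∈ ℝ^n. Then the minimum over all pairs of subsets S1, S2 ⊆ [n] of the objective f(S1, S2) = Σ_{i∈S1∩S2} a_i + Σ_{i∈S1} c_i + Σ_{j∈S2} d_j equals Σ_{e=1}^{n} min{0, c_e, d_e, a_e + c_e + d_e}; in particular, this minimum is attained. -/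
lemma copic_pointwise_min (a c d : ℝ) :
    (if a + c + d ≤ min (min 0 c) d then a + c + d
     else if c ≤ min 0 d then c
     else if d ≤ 0 then d else 0)
      = min (min 0 c) (min d (a + c + d)) := by
  split_ifs with h1 h2 h3
  · simp only [le_min_iff] at h1
    obtain ⟨⟨h0, hc⟩, hd⟩ := h1
    rw [min_eq_right hd, min_eq_right (le_min h0 hc)]
  · simp only [le_min_iff] at h2
    obtain ⟨hc0, hcd⟩ := h2
    push_neg at h1
    have hlb : c ≤ min (min 0 c) d := le_min (le_min hc0 le_rfl) hcd
    have hlt : c < a + c + d := lt_of_le_of_lt hlb h1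
    symm
    apply le_antisymm ((min_le_left _ _).trans (min_le_right _ _))
    simp only [le_min_iff]
    exact ⟨⟨hc0, le_refl _⟩, hcd, hlt.le⟩
  · simp only [le_min_iff, not_and_or, not_le] at h2
    have hdc : d < c := by
      rcases h2 with h | h
      · linarith
      · exact h
    push_neg at h1
    have hlb : d ≤ min (min 0 c) d := le_min (le_min h3 hdc.le) le_rfl
    have hlt : d < a + c + d := lt_of_le_of_lt hlb h1
    symm
    apply le_antisymm ((min_le_right _ _).trans (min_le_left _ _))
    simp only [le_min_iff]
    exact ⟨⟨h3, hdc.le⟩, le_refl _, hlt.le⟩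
  · push_neg at h3
    simp only [le_min_iff, not_and_or, not_le] at h2
    have hc0 : 0 < c := by
      rcases h2 with h | h
      · exact h
      · linarith
    push_neg at h1
    have hlb : (0:ℝ) ≤ min (min 0 c) d := le_min (le_min le_rfl hc0.le) h3.le
    have hlt : (0:ℝ) < a + c + d := lt_of_le_of_lt hlb h1
    symm
    apply le_antisymm ((min_le_left _ _).trans (min_le_left _ _))
    simp only [le_min_iff]
    exact ⟨⟨le_refl _, hc0.le⟩, h3.le, hlt.le⟩

/-- `COPIC(2^[n], 2^[n], diag(a), c, d)`: the minimum of
`f(S1,S2) = Σ_{i∈S1∩S2} a_i + Σ_{i∈S1} c_i + Σ_{j∈S2} d_j` over all pairs of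
subsets `S1, S2 ⊆ [n]` is attained and equals
`Σ_e min{0, c_e, d_e, a_e + c_e + d_e}`. -/
theorem copic_unconstrained_diagonal_min
    (n : ℕ) (hn : 0 < n) (a c d : Fin n → ℝ) :
    IsLeast
      {v : ℝ | ∃ S1 S2 : Finset (Fin n),
        v = ∑ i ∈ S1 ∩ S2, a i + ∑ i ∈ S1, c i + ∑ j ∈ S2, d j}
      (∑ e : Fin n, min (min 0 (c e)) (min (d e) (a e + c e + d e))) := by
  classical
  constructor
  · -- membership
    refine ⟨Finset.univ.filter (fun e =>
        (a e + c e + d e ≤ min (min 0 (c e)) (d e)) ∨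
        (¬ (a e + c e + d e ≤ min (min 0 (c e)) (d e)) ∧ c e ≤ min 0 (d e))),
      Finset.univ.filter (fun e =>
        (a e + c e + d e ≤ min (min 0 (c e)) (d e)) ∨
        (¬ (a e + c e + d e ≤ min (min 0 (c e)) (d e)) ∧
          ¬ c e ≤ min 0 (d e) ∧ d e ≤ 0)), ?_⟩
    rw [← Finset.filter_and]
    rw [Finset.sum_filter, Finset.sum_filter, Finset.sum_filter, ← Finset.sum_add_distrib,
      ← Finset.sum_add_distrib]
    apply Finset.sum_congr rfl
    intro e _
    rw [← copic_pointwise_min (a e) (c e) (d e)]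
    by_cases h1 : a e + c e + d e ≤ min (min 0 (c e)) (d e) <;>
      by_cases h2 : c e ≤ min 0 (d e) <;>
      by_cases h3 : d e ≤ 0 <;>
      simp only [h1, h2, h3, not_true, not_false_eq_true, true_and, false_and, and_true,
        and_false, or_false, false_or, true_or, or_true, if_true, if_false, add_zero,
        zero_add] <;> ring
  · -- lower bound
    rintro v ⟨S1, S2, rfl⟩
    have h1 : ∑ i ∈ S1 ∩ S2, a i = ∑ e : Fin n, if e ∈ S1 ∩ S2 then a e else 0 := by
      rw [Finset.sum_ite_mem, Finset.univ_inter]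
    have h2 : ∑ i ∈ S1, c i = ∑ e : Fin n, if e ∈ S1 then c e else 0 := by
      rw [Finset.sum_ite_mem, Finset.univ_inter]
    have h3 : ∑ j ∈ S2, d j = ∑ e : Fin n, if e ∈ S2 then d e else 0 := by
      rw [Finset.sum_ite_mem, Finset.univ_inter]
    rw [h1, h2, h3, ← Finset.sum_add_distrib, ← Finset.sum_add_distrib]
    apply Finset.sum_le_sum
    intro e _
    have k1 : min (min 0 (c e)) (min (d e) (a e + c e + d e)) ≤ 0 :=
      (min_le_left _ _).trans (min_le_left _ _)
    have k2 : min (min 0 (c e)) (min (d e) (a e + c e + d e)) ≤ c e :=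
      (min_le_left _ _).trans (min_le_right _ _)
    have k3 : min (min 0 (c e)) (min (d e) (a e + c e + d e)) ≤ d e :=
      (min_le_right _ _).trans (min_le_left _ _)
    have k4 : min (min 0 (c e)) (min (d e) (a e + c e + d e)) ≤ a e + c e + d e :=
      (min_le_right _ _).trans (min_le_right _ _)
    by_cases hS1 : e ∈ S1 <;> by_cases hS2 : e ∈ S2 <;>
      simp [Finset.mem_inter, hS1, hS2] <;> linarith
end

section
/- Let n be a positive integer, F a nonempty family of subsets of [n], and a, c, d ∈ ℝ^n. Define f_i = min{c_i + d_i + a_i, c_i} − min{d_i, 0} for each i ∈ [n]. Then the minimum over all S1 ∈ F and all subsets S2 ⊆ [n] of the objective Σ_{i∈S1∩S2} a_i + Σ_{i∈S1} c_i + Σ_{j∈S2} d_j equals (min_{S∈F} Σ_{i∈S} f_i) + Σ_{i=1}^{n} min{d_i, 0}. In particular, an optimal S1 is obtained by minimizing the linear cost f over F. -/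
/-- `COPIC(F, 2^[n], diag(a), c, d)` reduces to the linear problem `LCOP(F, f)` with
`f_i = min{c_i + d_i + a_i, c_i} − min{d_i, 0}`: the minimum of
`Σ_{i∈S1∩S2} a_i + Σ_{i∈S1} c_i + Σ_{j∈S2} d_j` over `S1 ∈ F` and `S2 ⊆ [n]`
is attained and equals `min_{S∈F} Σ_{i∈S} f_i + Σ_i min{d_i, 0}`. -/
theorem copic_one_sided_unconstrained_diagonal_min
    (n : ℕ) (hn : 0 < n) (F : Finset (Finset (Fin n))) (hF : F.Nonempty)
    (a c d : Fin n → ℝ)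
    (f : Fin n → ℝ) (hf : ∀ i, f i = min (c i + d i + a i) (c i) - min (d i) 0) :
    IsLeast
      {v : ℝ | ∃ S1 ∈ F, ∃ S2 : Finset (Fin n),
        v = ∑ i ∈ S1 ∩ S2, a i + ∑ i ∈ S1, c i + ∑ j ∈ S2, d j}
      ((F.inf' hF fun S => ∑ i ∈ S, f i) + ∑ i : Fin n, min (d i) 0) := by
  classical
  -- rewrite the objective using g j = d j + [j ∈ S1] a j
  have key : ∀ S1 S2 : Finset (Fin n),
      ∑ i ∈ S1 ∩ S2, a i + ∑ i ∈ S1, c i + ∑ j ∈ S2, d j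
        = ∑ i ∈ S1, c i + ∑ j ∈ S2, (d j + if j ∈ S1 then a j else 0) := by
    intro S1 S2
    rw [Finset.sum_add_distrib, Finset.sum_ite_mem, Finset.inter_comm]
    ring
  have point : ∀ (S1 : Finset (Fin n)) (j : Fin n),
      min (d j + if j ∈ S1 then a j else 0) 0
        = min (d j) 0 + (if j ∈ S1 then f j - c j else 0) := by
    intro S1 j
    by_cases h : j ∈ S1
    · simp only [h, if_true, hf j, min_def]
      split_ifs <;> linarith
    · simp [h]
  have base : ∀ S1 : Finset (Fin n),
      ∑ j : Fin n, min (d j + if j ∈ S1 then a j else 0) 0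
        = ∑ i : Fin n, min (d i) 0 + ∑ i ∈ S1, (f i - c i) := by
    intro S1
    simp only [point S1]
    rw [Finset.sum_add_distrib, Finset.sum_ite_mem, Finset.univ_inter]
  constructor
  · -- membership: take optimal S1 and greedy S2
    obtain ⟨S1, hS1, hS1v⟩ := Finset.exists_mem_eq_inf' hF (fun S => ∑ i ∈ S, f i)
    set g : Fin n → ℝ := fun j => d j + if j ∈ S1 then a j else 0 with hg
    refine ⟨S1, hS1, Finset.univ.filter (fun j => g j ≤ 0), ?_⟩
    have hS2 : ∑ j ∈ Finset.univ.filter (fun j => g j ≤ 0), g j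
        = ∑ j : Fin n, min (g j) 0 := by
      rw [Finset.sum_filter]
      refine Finset.sum_congr rfl fun j _ => ?_
      rcases le_or_gt (g j) 0 with h | h
      · simp [h, min_eq_left h]
      · simp [not_le.mpr h, min_eq_right h.le]
    rw [key, hS2, base S1, hS1v, Finset.sum_sub_distrib]
    ring
  · -- lower bound
    rintro v ⟨S1, hS1, S2, rfl⟩
    have hmin : ∑ j ∈ S2, (d j + if j ∈ S1 then a j else 0)
        ≥ ∑ j : Fin n, min (d j + if j ∈ S1 then a j else 0) 0 := by
      have hsd := Finset.sum_sdiff (f := fun j => min (d j + if j ∈ S1 then a j else 0) 0)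
        (Finset.subset_univ S2)
      have hnp : ∑ j ∈ Finset.univ \ S2, min (d j + if j ∈ S1 then a j else 0) 0 ≤ 0 :=
        Finset.sum_nonpos fun j _ => min_le_right _ _
      have hS2le : ∑ j ∈ S2, min (d j + if j ∈ S1 then a j else 0) 0
          ≤ ∑ j ∈ S2, (d j + if j ∈ S1 then a j else 0) :=
        Finset.sum_le_sum fun j _ => min_le_left _ _
      linarith
    have hle : F.inf' hF (fun S => ∑ i ∈ S, f i) ≤ ∑ i ∈ S1, f i :=
      Finset.inf'_le _ hS1
    have := base S1
    rw [key]
    rw [Finset.sum_sub_distrib] at this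
    linarith
end

section
/- Let M1 and M2 be matroids on a common finite ground set E and let a : E → ℝ. Suppose B is a common independent set of M1 and M2 (i.e., B is independent in both M1 and M2) of minimum cost a(B) = Σ_{e∈B} a_e among all common independent sets. Then for any base B1 of M1 and any base B2 of M2 there exist a base B̃1 of M1 and a base B̃2 of M2 such that B ⊆ B̃1 ∩ B̃2 and a(B̃1 ∩ B̃2) ≤ a(B1 ∩ B2). -/
/-- Let `B` be a minimum-cost common independent set of two matroids `M1, M2` on a
common finite ground set. Then any pair of bases `B1, B2` can be transformed into
bases `B̃1, B̃2` with `B ⊆ B̃1 ∩ B̃2` whose intersection cost does not exceed that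
of `B1 ∩ B2`. -/
theorem matroid_min_common_independent_extends_to_bases
    {α : Type*} [Fintype α] [DecidableEq α]
    (M1 M2 : Matroid α) (hE1 : M1.E = Set.univ) (hE2 : M2.E = Set.univ)
    (a : α → ℝ) (B : Finset α)
    (hB1 : M1.Indep (B : Set α)) (hB2 : M2.Indep (B : Set α))
    (hBmin : ∀ S : Finset α, M1.Indep (S : Set α) → M2.Indep (S : Set α) →
      ∑ e ∈ B, a e ≤ ∑ e ∈ S, a e)
    (B1 B2 : Finset α) (hB1base : M1.IsBase (B1 : Set α)) (hB2base : M2.IsBase (B2 : Set α)) :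
    ∃ Bt1 Bt2 : Finset α, M1.IsBase (Bt1 : Set α) ∧ M2.IsBase (Bt2 : Set α) ∧
      B ⊆ Bt1 ∩ Bt2 ∧ ∑ e ∈ Bt1 ∩ Bt2, a e ≤ ∑ e ∈ B1 ∩ B2, a e := by
  obtain ⟨C1, hC1base, hBC1, hC1sub⟩ := hB1.exists_isBase_subset_union_isBase hB1base
  obtain ⟨C2, hC2base, hBC2, hC2sub⟩ := hB2.exists_isBase_subset_union_isBase hB2base
  set Bt1 : Finset α := (Set.toFinite C1).toFinset with hBt1
  set Bt2 : Finset α := (Set.toFinite C2).toFinset with hBt2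
  have hco1 : (Bt1 : Set α) = C1 := Set.Finite.coe_toFinset _
  have hco2 : (Bt2 : Set α) = C2 := Set.Finite.coe_toFinset _
  refine ⟨Bt1, Bt2, by rwa [hco1], by rwa [hco2], ?_, ?_⟩
  · intro e he
    simp only [Finset.mem_inter]
    constructor
    · have : e ∈ C1 := hBC1 (by simpa using he)
      rw [← hco1] at this; simpa using this
    · have : e ∈ C2 := hBC2 (by simpa using he)
      rw [← hco2] at this; simpa using this
  · -- cost bound
    set X : Finset α := Bt1 ∩ Bt2 with hX
    have hBX : B ⊆ X := by
      intro e he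
      simp only [hX, Finset.mem_inter]
      constructor
      · have : e ∈ C1 := hBC1 (by simpa using he)
        rw [← hco1] at this; simpa using this
      · have : e ∈ C2 := hBC2 (by simpa using he)
        rw [← hco2] at this; simpa using this
    set T : Finset α := X \ B with hT
    have hTsub : T ⊆ B1 ∩ B2 := by
      intro e he
      rw [hT, Finset.mem_sdiff] at he
      obtain ⟨heX, heB⟩ := he
      rw [hX, Finset.mem_inter] at heX
      have he1 : e ∈ C1 := by rw [← hco1]; exact_mod_cast heX.1
      have he2 : e ∈ C2 := by rw [← hco2]; exact_mod_cast heX.2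
      have h1 : e ∈ (B1 : Set α) := by
        rcases hC1sub he1 with h | h
        · exact absurd (by simpa using h) heB
        · exact h
      have h2 : e ∈ (B2 : Set α) := by
        rcases hC2sub he2 with h | h
        · exact absurd (by simpa using h) heB
        · exact h
      exact Finset.mem_inter.mpr ⟨by exact_mod_cast h1, by exact_mod_cast h2⟩
    have hXsum : ∑ e ∈ X, a e = ∑ e ∈ T, a e + ∑ e ∈ B, a e := by
      rw [hT]; exact (Finset.sum_sdiff hBX).symm
    have hIsum : ∑ e ∈ B1 ∩ B2, a e
        = ∑ e ∈ (B1 ∩ B2) \ T, a e + ∑ e ∈ T, a e := by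
      rw [Finset.sum_sdiff_eq_sub hTsub]; ring
    have hSind1 : M1.Indep (((B1 ∩ B2) \ T : Finset α) : Set α) :=
      hB1base.indep.subset (by
        intro e he
        simp only [Finset.coe_sdiff, Finset.coe_inter, Set.mem_diff, Set.mem_inter_iff] at he
        exact he.1.1)
    have hSind2 : M2.Indep (((B1 ∩ B2) \ T : Finset α) : Set α) :=
      hB2base.indep.subset (by
        intro e he
        simp only [Finset.coe_sdiff, Finset.coe_inter, Set.mem_diff, Set.mem_inter_iff] at he
        exact he.1.2)
    have hmin := hBmin _ hSind1 hSind2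
    rw [hXsum, hIsum]
    linarith
end

section
/- Let m ≥ 2 and let R = (r_{ij}) be a real m×m matrix. Then the assignment cost Σ_{i=1}^{m} r_{i,σ(i)} takes the same value for every permutation σ of [m] if and only if there exist vectors s, t ∈ ℝ^m with r_{ij} = s_i + t_j for all i, j ∈ [m]. -/
/-- A linear assignment instance `R` has the constant objective property
(the assignment cost is the same for every permutation) if and only if
`r_{ij} = s_i + t_j` for some vectors `s, t`. -/
theorem assignment_constant_objective_iff
    (m : ℕ) (hm : 2 ≤ m) (R : Fin m → Fin m → ℝ) :
    (∃ K : ℝ, ∀ σ : Equiv.Perm (Fin m), ∑ i : Fin m, R i (σ i) = K) ↔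
    (∃ s t : Fin m → ℝ, ∀ i j, R i j = s i + t j) := by
  constructor
  · rintro ⟨K, hK⟩
    have hm0 : 0 < m := by omega
    set z : Fin m := ⟨0, hm0⟩ with hz
    refine ⟨fun i => R i z - R z z, fun j => R z j, ?_⟩
    intro i j
    rcases eq_or_ne i z with rfl | hi
    · ring
    rcases eq_or_ne j z with rfl | hj
    · ring
    -- main case : i ≠ z, j ≠ z
    set f : Fin m → ℝ := fun k => R k (Equiv.swap i j k) with hf
    set g : Fin m → ℝ := fun k => R k (Equiv.swap i j (Equiv.swap z i k)) with hg
    have h1 : ∑ k : Fin m, f k = K := hK (Equiv.swap i j)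
    have h2 : ∑ k : Fin m, g k = K := hK ((Equiv.swap i j) * (Equiv.swap z i))
    have hsub : ({z, i} : Finset (Fin m)) ⊆ Finset.univ := Finset.subset_univ _
    have hfg : ∀ k ∈ Finset.univ \ ({z, i} : Finset (Fin m)), f k = g k := by
      intro k hk
      simp only [Finset.mem_sdiff, Finset.mem_insert, Finset.mem_singleton] at hk
      push_neg at hk
      simp [hf, hg, Equiv.swap_apply_of_ne_of_ne hk.2.1 hk.2.2]
    have hs1 := Finset.sum_sdiff (f := f) hsub
    have hs2 := Finset.sum_sdiff (f := g) hsub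
    have hsame : ∑ k ∈ Finset.univ \ ({z, i} : Finset (Fin m)), f k
        = ∑ k ∈ Finset.univ \ ({z, i} : Finset (Fin m)), g k :=
      Finset.sum_congr rfl hfg
    have hzi : z ≠ i := Ne.symm hi
    have hpair : f z + f i = g z + g i := by
      have e1 : ∑ k ∈ ({z, i} : Finset (Fin m)), f k = f z + f i :=
        Finset.sum_pair hzi
      have e2 : ∑ k ∈ ({z, i} : Finset (Fin m)), g k = g z + g i :=
        Finset.sum_pair hzi
      have : ∑ k ∈ ({z, i} : Finset (Fin m)), f k
          = ∑ k ∈ ({z, i} : Finset (Fin m)), g k := by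
        have := hs1.trans (h1.trans h2.symm)
        rw [hsame] at this
        linarith [hs2, this]
      linarith [e1, e2, this]
    have fz : f z = R z z := by
      simp [hf, Equiv.swap_apply_of_ne_of_ne hi.symm hj.symm]
    have fi : f i = R i j := by simp [hf]
    have gz : g z = R z j := by
      simp [hg, Equiv.swap_apply_left]
    have gi : g i = R i z := by
      have : Equiv.swap z i i = z := Equiv.swap_apply_right z i
      simp [hg, this, Equiv.swap_apply_of_ne_of_ne hi.symm hj.symm]
    rw [fz, fi, gz, gi] at hpair
    show R i j = R i z - R z z + R z j
    linarith
  · rintro ⟨s, t, h⟩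
    refine ⟨∑ i, s i + ∑ j, t j, fun σ => ?_⟩
    have : ∑ i : Fin m, R i (σ i) = ∑ i, (s i + t (σ i)) := by
      exact Finset.sum_congr rfl fun i _ => h i (σ i)
    rw [this, Finset.sum_add_distrib, Equiv.sum_comp σ t]
end

section
/- Let n ≥ 3, let E_n denote the edge set of the complete graph K_n, and let w : E_n → ℝ. Then the tree cost Σ_{e∈T} w_e takes the same value for every spanning tree T of K_n if and only if w is a constant function, i.e., there exists c ∈ ℝ with w_e = c for all e ∈ E_n. -/
/-- A "near-star" tree: star centered at `a`, except the leaf `b` is attached to `c`. -/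
def nearStar (n : ℕ) (a b c : Fin n) : Finset (Sym2 (Fin n)) :=
  (Finset.univ.erase a).image (fun x => if x = b then s(c, b) else s(a, x))

lemma nearStar_injOn (n : ℕ) (a b c : Fin n) (hab : a ≠ b) (hcb : c ≠ b) :
    Set.InjOn (fun x => if x = b then s(c, b) else s(a, x)) (Finset.univ.erase a) := by
  intro x hx y hy hxy
  have hxa : x ≠ a := by simpa using hx
  have hya : y ≠ a := by simpa using hy
  by_cases hxb : x = b
  · by_cases hyb : y = b
    · rw [hxb, hyb]
    · exfalso
      simp only [if_pos hxb, if_neg hyb, Sym2.eq_iff] at hxy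
      rcases hxy with ⟨hca, hby⟩ | ⟨hcy, hba⟩
      · exact hyb hby.symm
      · exact hab hba.symm
  · by_cases hyb : y = b
    · exfalso
      simp only [if_neg hxb, if_pos hyb, Sym2.eq_iff] at hxy
      rcases hxy with ⟨hac, hxb'⟩ | ⟨hab', hxc⟩
      · exact hxb hxb'
      · exact hab hab'
    · simp only [if_neg hxb, if_neg hyb, Sym2.eq_iff] at hxy
      rcases hxy with ⟨-, h⟩ | ⟨hay, hxa'⟩
      · exact h
      · exact absurd hxa' hxa

lemma nearStar_isSpanningTree (n : ℕ) (a b c : Fin n) (hab : a ≠ b) (hcb : c ≠ b) :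
    IsSpanningTreeEdgeSet n (nearStar n a b c) := by
  refine ⟨?_, ?_, ?_⟩
  · intro e he
    simp only [nearStar, Finset.mem_image, Finset.mem_erase] at he
    obtain ⟨x, ⟨hxa, -⟩, rfl⟩ := he
    by_cases hxb : x = b
    · simp [hxb, Sym2.mk_isDiag_iff, hcb]
    · simp [hxb, Sym2.mk_isDiag_iff, Ne.symm hxa]
  · rw [nearStar, Finset.card_image_of_injOn (nearStar_injOn n a b c hab hcb),
      Finset.card_erase_of_mem (Finset.mem_univ a), Finset.card_univ, Fintype.card_fin]
  · have hmem : ∀ x : Fin n, x ≠ a →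
        (if x = b then s(c, b) else s(a, x)) ∈ (nearStar n a b c : Set (Sym2 (Fin n))) := by
      intro x hx
      simp only [Finset.mem_coe, nearStar, Finset.mem_image, Finset.mem_erase]
      exact ⟨x, ⟨hx, Finset.mem_univ x⟩, rfl⟩
    have hadj : ∀ x : Fin n, x ≠ a → x ≠ b →
        (SimpleGraph.fromEdgeSet (nearStar n a b c : Set (Sym2 (Fin n)))).Adj a x := by
      intro x hxa hxb
      rw [SimpleGraph.fromEdgeSet_adj]
      refine ⟨?_, Ne.symm hxa⟩
      have := hmem x hxa
      rwa [if_neg hxb] at this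
    have hcbadj : (SimpleGraph.fromEdgeSet (nearStar n a b c : Set (Sym2 (Fin n)))).Adj c b := by
      rw [SimpleGraph.fromEdgeSet_adj]
      refine ⟨?_, hcb⟩
      have := hmem b (Ne.symm hab)
      rwa [if_pos rfl] at this
    have hreach : ∀ v : Fin n,
        (SimpleGraph.fromEdgeSet (nearStar n a b c : Set (Sym2 (Fin n)))).Reachable a v := by
      intro v
      by_cases hva : v = a
      · rw [hva]
      by_cases hvb : v = b
      · rw [hvb]
        by_cases hca : c = a
        · subst hca; exact hcbadj.reachable
        · exact ((hadj c hca hcb).reachable).trans hcbadj.reachable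
      · exact (hadj v hva hvb).reachable
    have : Nonempty (Fin n) := ⟨a⟩
    exact SimpleGraph.Connected.mk (fun u v => (hreach u).symm.trans (hreach v))

lemma nearStar_sum (n : ℕ) (a b c : Fin n) (hab : a ≠ b) (hcb : c ≠ b)
    (w : Sym2 (Fin n) → ℝ) :
    ∑ e ∈ nearStar n a b c, w e
      = w s(c, b) + ∑ x ∈ (Finset.univ.erase a).erase b, w s(a, x) := by
  rw [nearStar, Finset.sum_image (fun x hx y hy h =>
    nearStar_injOn n a b c hab hcb (by simpa using hx) (by simpa using hy) h)]
  have hb : b ∈ Finset.univ.erase a := Finset.mem_erase.mpr ⟨Ne.symm hab, Finset.mem_univ b⟩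
  rw [← Finset.add_sum_erase _ _ hb, if_pos rfl]
  congr 1
  apply Finset.sum_congr rfl
  intro x hx
  rw [if_neg (Finset.mem_erase.mp hx).1]

/-- The spanning tree problem on `K_n` has the constant objective property
(the tree cost is the same for every spanning tree) if and only if the edge
cost function is constant on the edges of `K_n`. -/
theorem spanning_tree_constant_objective_iff
    (n : ℕ) (hn : 3 ≤ n) (w : Sym2 (Fin n) → ℝ) :
    (∃ K : ℝ, ∀ T : Finset (Sym2 (Fin n)), IsSpanningTreeEdgeSet n T →
      ∑ e ∈ T, w e = K) ↔
    (∃ c : ℝ, ∀ e : Sym2 (Fin n), ¬ e.IsDiag → w e = c) := by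
  constructor
  · rintro ⟨K, hK⟩
    have key : ∀ a b c : Fin n, a ≠ b → c ≠ b → w s(a, b) = w s(c, b) := by
      intro a b c hab hcb
      have h1 := hK _ (nearStar_isSpanningTree n a b a hab hab)
      have h2 := hK _ (nearStar_isSpanningTree n a b c hab hcb)
      rw [nearStar_sum n a b a hab hab w] at h1
      rw [nearStar_sum n a b c hab hcb w] at h2
      linarith
    have key2 : ∀ a b c : Fin n, b ≠ a → c ≠ a → w s(a, b) = w s(a, c) := by
      intro a b c hba hca
      rw [Sym2.eq_swap (a := a) (b := b), Sym2.eq_swap (a := a) (b := c)]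
      exact key b a c hba hca
    have main : ∀ a b c d : Fin n, a ≠ b → c ≠ d → w s(a, b) = w s(c, d) := by
      intro a b c d hab hcd
      by_cases hcb : c = b
      · subst hcb
        rw [key a c d hab (Ne.symm hcd), Sym2.eq_swap]
      · rw [key a b c hab hcb]
        exact key2 c b d (Ne.symm hcb) (Ne.symm hcd)
    have h01 : (⟨0, by omega⟩ : Fin n) ≠ ⟨1, by omega⟩ := by
      simp [Fin.ext_iff]
    refine ⟨w s((⟨0, by omega⟩ : Fin n), (⟨1, by omega⟩ : Fin n)), ?_⟩
    intro e he
    induction e with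
    | _ x y =>
      exact main x y _ _ (fun h => he (by simp [Sym2.mk_isDiag_iff, h])) h01
  · rintro ⟨c, hc⟩
    refine ⟨(n - 1 : ℕ) * c, ?_⟩
    intro T hT
    obtain ⟨hdiag, hcard, -⟩ := hT
    rw [Finset.sum_congr rfl (fun e he => hc e (hdiag e he)), Finset.sum_const, hcard,
      nsmul_eq_mul]
end
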